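/- Let A be a symmetric positive definite n×n matrix with orthonormal eigenvectors e₁,…,eₙ and eigenvalues λ₁,…,λₙ. Fix f ∈ ℝⁿ and x ∈ ℝⁿ. If i is uniform on {1,…,n} and ε is uniform on {+1,−1}, independent, and we set y = x + ε λᵢ^{-1/2} eᵢ and f̃ = n (fᵀy) ε λᵢ^{1/2} eᵢ, then E[f̃] = f. -/
import Mathlib


open Matrix

/-- Unbiasedness of the SCRiBLe single-point gradient estimator:
with y(i,ε) = x + ε λᵢ^{-1/2} eᵢ and f̃(i,ε) = n (fᵀ y(i,ε)) ε λᵢ^{1/2} eᵢ,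
averaging over i uniform on Fin n and ε uniform on {±1} gives E[f̃] = f. -/
theorem stmt_3 {n : ℕ} (hn : 0 < n) (A : Matrix (Fin n) (Fin n) ℝ)
    (hsymm : A.IsSymm) (hpos : A.PosDef)
    (e : Fin n → (Fin n → ℝ)) (lam : Fin n → ℝ)
    (horth : ∀ i j : Fin n, e i ⬝ᵥ e j = if i = j then 1 else 0)
    (heig : ∀ i : Fin n, A.mulVec (e i) = lam i • e i)
    (hlam : ∀ i : Fin n, 0 < lam i)
    (hbasis : ∀ v : Fin n → ℝ, v = ∑ i : Fin n, (v ⬝ᵥ e i) • e i)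
    (f x : Fin n → ℝ)
    (y : Fin n → ℝ → (Fin n → ℝ))
    (hy : ∀ (i : Fin n) (ε : ℝ), y i ε = x + ε • (lam i) ^ (-(1:ℝ)/2) • e i)
    (ftil : Fin n → ℝ → (Fin n → ℝ))
    (hftil : ∀ (i : Fin n) (ε : ℝ),
      ftil i ε = ((n : ℝ) * (f ⬝ᵥ y i ε) * ε * (lam i) ^ ((1:ℝ)/2)) • e i) :
    (1 / (2 * (n : ℝ))) • (∑ i : Fin n, (ftil i 1 + ftil i (-1))) = f := by
  have key : ∀ i : Fin n, ftil i 1 + ftil i (-1) = ((2 * (n:ℝ)) * (f ⬝ᵥ e i)) • e i := by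
    intro i
    have hc : (lam i) ^ (-(1:ℝ)/2) * (lam i) ^ ((1:ℝ)/2) = 1 := by
      rw [← Real.rpow_add (hlam i)]
      norm_num
    rw [hftil, hftil, hy, hy]
    rw [← add_smul]
    congr 1
    simp only [dotProduct_add, dotProduct_smul, smul_eq_mul]
    linear_combination (2 * (n:ℝ) * (f ⬝ᵥ e i)) * hc
  have hn' : (n:ℝ) ≠ 0 := Nat.cast_ne_zero.mpr hn.ne'
  have h2 : ∀ i : Fin n, (1 / (2 * (n:ℝ))) • ((2 * (n:ℝ) * (f ⬝ᵥ e i)) • e i)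
      = (f ⬝ᵥ e i) • e i := by
    intro i
    rw [smul_smul]
    congr 1
    field_simp
  simp only [key]
  rw [Finset.smul_sum]
  simp only [h2]
  exact (hbasis f).symm
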